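/- For a simple connected graph G on n ≥ 2 vertices, the largest normalized Laplacian eigenvalue satisfies λ_1 ≥ 1 + √((2/(n(n-1)))·∑_{(i,j)∈E} 1/(d_i d_j)). -/

import Mathlib

/-!
All degrees are positive, so `normLap G` has unit diagonal and the diagonal of its square is
`1 + ∑_{j ∼ i} 1 / (d_i d_j)`. Taking traces, the eigenvalues satisfy `∑ λ_i = n` and
`∑ λ_i² = n + 2 ∑_E 1 / (d_i d_j)`, so the deviations `x_i = λ_i - 1` sum to `0` and their squares
to `2 ∑_E 1 / (d_i d_j)`. If `x_i ≤ M` for all `i`, then `x_i = -∑_{j ≠ i} x_j ≥ -(n - 1) M`, and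
summing `(M - x_i) (x_i + (n - 1) M) ≥ 0` gives `∑ x_i² ≤ n (n - 1) M²`.
-/

open Matrix Finset

/-- The normalized Laplacian `D^{-1/2} (D - A) D^{-1/2}` of a simple graph. -/
noncomputable def normLap {n : ℕ} (G : SimpleGraph (Fin n)) [DecidableRel G.Adj] :
    Matrix (Fin n) (Fin n) ℝ :=
  let Dinvhalf : Matrix (Fin n) (Fin n) ℝ :=
    Matrix.diagonal fun i => (Real.sqrt (G.degree i))⁻¹
  Dinvhalf * (Matrix.diagonal (fun i => (G.degree i : ℝ)) - G.adjMatrix ℝ) * Dinvhalf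

/-- The sum over the edges of `G` of `1/(d_i d_j)`, written as half the sum over
ordered adjacent pairs. -/
noncomputable def edgeDegSum {n : ℕ} (G : SimpleGraph (Fin n)) [DecidableRel G.Adj] : ℝ :=
  (1 / 2) * ∑ i, ∑ j, if G.Adj i j then 1 / ((G.degree i : ℝ) * (G.degree j : ℝ)) else 0

section SumZero

variable {ι : Type*} [Fintype ι] {x : ι → ℝ} {M : ℝ}

theorem neg_card_sub_one_mul_le_of_sum_eq_zero (hsum : ∑ i, x i = 0) (hle : ∀ i, x i ≤ M)
    (i : ι) : -((Fintype.card ι - 1) * M) ≤ x i := by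
  classical
  have hrest : ∑ j ∈ univ.erase i, x j ≤ (Fintype.card ι - 1) * M := by
    calc ∑ j ∈ univ.erase i, x j ≤ ∑ _j ∈ univ.erase i, M := sum_le_sum fun j _ => hle j
      _ = (Fintype.card ι - 1) * M := by
        rw [sum_const, nsmul_eq_mul, cast_card_erase_of_mem (mem_univ i), card_univ]
  have := add_sum_erase univ x (mem_univ i)
  linarith

theorem sum_sq_le_card_mul_card_sub_one_mul_sq (hsum : ∑ i, x i = 0) (hle : ∀ i, x i ≤ M) :
    ∑ i, x i ^ 2 ≤ Fintype.card ι * (Fintype.card ι - 1) * M ^ 2 := by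
  set c : ℝ := (Fintype.card ι : ℝ)
  have hterm : ∀ i, 0 ≤ (M - x i) * (x i + (c - 1) * M) := fun i =>
    mul_nonneg (sub_nonneg.2 (hle i))
      (neg_le_iff_add_nonneg.1 (neg_card_sub_one_mul_le_of_sum_eq_zero hsum hle i))
  have hexpand : ∑ i, (M - x i) * (x i + (c - 1) * M) = c * (c - 1) * M ^ 2 - ∑ i, x i ^ 2 := by
    have : ∀ i, (M - x i) * (x i + (c - 1) * M) =
        (2 - c) * M * x i + (c - 1) * M ^ 2 - x i ^ 2 := fun i => by ring
    simp only [this, sum_sub_distrib, sum_add_distrib, ← mul_sum, hsum, sum_const, card_univ,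
      nsmul_eq_mul]
    ring
  linarith [sum_nonneg fun i (_ : i ∈ univ) => hterm i]

theorem sqrt_sum_sq_div_le_of_sum_eq_zero (hι : 1 < Fintype.card ι) (hsum : ∑ i, x i = 0)
    (hle : ∀ i, x i ≤ M) :
    √((∑ i, x i ^ 2) / (Fintype.card ι * (Fintype.card ι - 1))) ≤ M := by
  have hc : (1 : ℝ) < Fintype.card ι := by exact_mod_cast hι
  have hM : 0 ≤ M := by
    have : 0 ≤ (Fintype.card ι : ℝ) * M := by
      simpa [hsum] using sum_le_sum fun i (_ : i ∈ univ) => hle i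
    exact nonneg_of_mul_nonneg_right this (by linarith)
  rw [Real.sqrt_le_left hM, div_le_iff₀ (by nlinarith)]
  linarith [sum_sq_le_card_mul_card_sub_one_mul_sq hsum hle]

end SumZero

theorem Matrix.IsHermitian.trace_mul_self_eq_sum_sq_eigenvalues {𝕜 n : Type*} [RCLike 𝕜]
    [Fintype n] [DecidableEq n] {A : Matrix n n 𝕜} (hA : A.IsHermitian) :
    (A * A).trace = ∑ i, (hA.eigenvalues i : 𝕜) ^ 2 := by
  conv_lhs => rw [hA.spectral_theorem, ← map_mul, Unitary.conjStarAlgAut_apply, trace_mul_cycle,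
    Unitary.coe_star_mul_self, one_mul, diagonal_mul_diagonal, trace_diagonal]
  simp [sq]

section NormLap

variable {n : ℕ} (G : SimpleGraph (Fin n)) [DecidableRel G.Adj]

theorem normLap_apply (i j : Fin n) :
    normLap G i j = (√(G.degree i))⁻¹ *
      ((if i = j then (G.degree i : ℝ) else 0) - if G.Adj i j then 1 else 0) *
        (√(G.degree j))⁻¹ := by
  simp [normLap, mul_apply, diagonal_apply, ite_mul, mul_ite]

theorem normLap_apply_self {i : Fin n} (hi : 0 < G.degree i) : normLap G i i = 1 := by
  have hd : (0 : ℝ) < G.degree i := by exact_mod_cast hi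
  rw [normLap_apply, if_pos rfl, if_neg (G.irrefl), sub_zero, mul_comm, ← mul_assoc, ← mul_inv,
    Real.mul_self_sqrt hd.le, inv_mul_cancel₀ hd.ne']

theorem normLap_apply_mul_apply_of_ne {i j : Fin n} (hij : i ≠ j) :
    normLap G i j * normLap G j i =
      if G.Adj i j then ((G.degree i : ℝ) * G.degree j)⁻¹ else 0 := by
  by_cases hadj : G.Adj i j
  · simp only [normLap_apply, if_neg hij, if_neg hij.symm, if_pos hadj, if_pos hadj.symm]
    calc _ = ((√(G.degree i)) ^ 2 * (√(G.degree j)) ^ 2 : ℝ)⁻¹ := by ring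
      _ = _ := by simp only [Real.sq_sqrt (Nat.cast_nonneg _)]
  · simp [normLap_apply, hadj, G.adj_comm j i, hij, hij.symm]

theorem trace_normLap (hdeg : ∀ i, 0 < G.degree i) : (normLap G).trace = n := by
  simp [trace, normLap_apply_self G (hdeg _)]

theorem trace_normLap_mul_self (hdeg : ∀ i, 0 < G.degree i) :
    (normLap G * normLap G).trace = n + 2 * edgeDegSum G := by
  have hentry : ∀ i j, normLap G i j * normLap G j i =
      (if i = j then 1 else 0) + if G.Adj i j then ((G.degree i : ℝ) * G.degree j)⁻¹ else 0 := by
    intro i j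
    rcases eq_or_ne i j with rfl | hij
    · simp [normLap_apply_self G (hdeg i)]
    · simp [normLap_apply_mul_apply_of_ne G hij, hij]
  simp only [trace, diag_apply, mul_apply, hentry, sum_add_distrib, sum_ite_eq, mem_univ,
    if_true, sum_const, card_univ, Fintype.card_fin, nsmul_eq_mul, edgeDegSum, one_div]
  ring

end NormLap

theorem lambda_one_ge_P {n : ℕ} (hn : 2 ≤ n) (G : SimpleGraph (Fin n)) [DecidableRel G.Adj]
    (hG : G.Connected) (hH : (normLap G).IsHermitian)
    (lam : Fin n → ℝ) (hanti : Antitone lam)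
    (hperm : ∃ σ : Equiv.Perm (Fin n), lam = hH.eigenvalues ∘ σ) :
    lam ⟨0, by omega⟩ ≥
      1 + Real.sqrt ((2 / ((n : ℝ) * ((n : ℝ) - 1))) * edgeDegSum G) := by
  have : Nontrivial (Fin n) := Fin.nontrivial_iff_two_le.mpr hn
  have hdeg : ∀ i, 0 < G.degree i := fun i => hG.preconnected.degree_pos_of_nontrivial i
  obtain ⟨σ, hσ⟩ := hperm
  have hsum : ∑ i, lam i = n := by
    simpa [hσ, Equiv.sum_comp σ hH.eigenvalues, trace_normLap G hdeg] using
      hH.trace_eq_sum_eigenvalues.symm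
  have hsum_sq : ∑ i, lam i ^ 2 = n + 2 * edgeDegSum G := by
    simpa [hσ, Equiv.sum_comp σ (hH.eigenvalues · ^ 2), trace_normLap_mul_self G hdeg] using
      hH.trace_mul_self_eq_sum_sq_eigenvalues.symm
  set x : Fin n → ℝ := fun i => lam i - 1
  have hx : ∑ i, x i = 0 := by simp [x, sum_sub_distrib, hsum]
  have hx_sq : ∑ i, x i ^ 2 = 2 * edgeDegSum G := by
    simp only [x, sub_sq, mul_one, one_pow, sum_add_distrib, sum_sub_distrib, ← mul_sum, sum_const,
      card_univ, Fintype.card_fin, nsmul_eq_mul, hsum, hsum_sq]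
    ring
  have hx_le : ∀ i, x i ≤ x ⟨0, by omega⟩ := fun i =>
    sub_le_sub_right (hanti (show ⟨0, _⟩ ≤ i from Nat.zero_le _)) 1
  have hdev := sqrt_sum_sq_div_le_of_sum_eq_zero (by rw [Fintype.card_fin]; omega) hx hx_le
  rw [hx_sq, Fintype.card_fin, ← div_mul_eq_mul_div] at hdev
  linarith
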